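/- arXiv:0707.0050 — 3 statements merged into one kernel-verified Lean document; each statement's English description precedes it below -/
import Mathlib

section
/- Let σ² > 0, let A be a diagonal N×N complex matrix with spectral norm at most h_max², and let B be a Hermitian positive semidefinite N×N matrix, q ∈ ℂ^N. Then tr(((B + σ²I)^{-1} − (B + qq^H + σ²I)^{-1})·A) ≤ h_max²/σ². -/
/-!
With `M = B + σ²I`, `w = M⁻¹q` and `α = q^H M⁻¹ q ≥ 0`, the Sherman–Morrison formula gives
`M⁻¹ - (M + qq^H)⁻¹ = ww^H / (1 + α)`, so the trace equals `w^H A w / (1 + α)`.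
The numerator is at most `‖A‖ ‖w‖²`, and `σ² ‖w‖² ≤ w^H M w = α`, hence the trace is at most
`‖A‖ α / (σ² (1 + α)) ≤ ‖A‖ / σ²`.
-/

open scoped ComplexOrder
open Matrix

namespace Matrix

variable {n K 𝕜 : Type*}

theorem PosSemidef.posDef_add_smul_one [DecidableEq n] [RCLike 𝕜] {B : Matrix n n 𝕜}
    (hB : B.PosSemidef) {σ : ℝ} (hσ : 0 < σ) : (B + (σ : 𝕜) • 1).PosDef := by
  rw [smul_one_eq_diagonal]
  exact PosDef.posSemidef_add hB (PosDef.diagonal fun _ => by exact_mod_cast hσ)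

variable [Fintype n]

theorem inv_sub_inv_add_vecMulVec [DecidableEq n] [Field K] {M : Matrix n n K} (hM : IsUnit M)
    (u v : n → K) (h : 1 + v ⬝ᵥ (M⁻¹ *ᵥ u) ≠ 0) :
    M⁻¹ - (M + vecMulVec u v)⁻¹ =
      (1 + v ⬝ᵥ (M⁻¹ *ᵥ u))⁻¹ • vecMulVec (M⁻¹ *ᵥ u) (v ᵥ* M⁻¹) := by
  set α := v ⬝ᵥ (M⁻¹ *ᵥ u)
  rw [sub_eq_iff_eq_add', ← sub_eq_iff_eq_add]
  refine (inv_eq_right_inv ?_).symm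
  have hMM : M * M⁻¹ = 1 := mul_nonsing_inv M ((isUnit_iff_isUnit_det M).mp hM)
  rw [add_mul, mul_sub, mul_sub, hMM, mul_smul_comm, mul_smul_comm, mul_vecMulVec, mulVec_mulVec,
    hMM, one_mulVec, vecMulVec_mul, vecMulVec_mul_vecMulVec, vecMulVec_smul, ← mul_smul]
  have hcoeff : 1 - (1 + α)⁻¹ - (1 + α)⁻¹ * α = 0 := by field_simp; ring
  calc _ = 1 + (1 - (1 + α)⁻¹ - (1 + α)⁻¹ * α) • vecMulVec u (v ᵥ* M⁻¹) := by module
    _ = 1 := by rw [hcoeff, zero_smul, add_zero]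

theorem trace_vecMulVec_mul [CommSemiring K] (u v : n → K) (A : Matrix n n K) :
    (vecMulVec u v * A).trace = v ⬝ᵥ (A *ᵥ u) := by
  rw [vecMulVec_mul, trace_vecMulVec, dotProduct_comm, dotProduct_mulVec]

theorem IsHermitian.trace_inv_sub_inv_add_vecMulVec_star_mul [DecidableEq n] [Field K]
    [StarRing K] {M : Matrix n n K} (hM : M.IsHermitian) (hMu : IsUnit M) (q : n → K)
    (h : 1 + star q ⬝ᵥ (M⁻¹ *ᵥ q) ≠ 0) (A : Matrix n n K) :
    ((M⁻¹ - (M + vecMulVec q (star q))⁻¹) * A).trace =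
      (1 + star q ⬝ᵥ (M⁻¹ *ᵥ q))⁻¹ * (star (M⁻¹ *ᵥ q) ⬝ᵥ (A *ᵥ (M⁻¹ *ᵥ q))) := by
  rw [inv_sub_inv_add_vecMulVec hMu q (star q) h, smul_mul, trace_smul, trace_vecMulVec_mul,
    star_mulVec, hM.inv.eq, smul_eq_mul]

theorem IsHermitian.dotProduct_mulVec_inv_mulVec [DecidableEq n] [Field K] [StarRing K]
    {M : Matrix n n K} (hM : M.IsHermitian) (hMu : IsUnit M) (q : n → K) :
    star (M⁻¹ *ᵥ q) ⬝ᵥ (M *ᵥ (M⁻¹ *ᵥ q)) = star q ⬝ᵥ (M⁻¹ *ᵥ q) := by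
  rw [mulVec_mulVec, mul_nonsing_inv M ((isUnit_iff_isUnit_det M).mp hMu), one_mulVec,
    star_mulVec, hM.inv.eq, ← dotProduct_mulVec]

variable [RCLike 𝕜]

theorem IsDiag.re_dotProduct_mulVec_le {A : Matrix n n 𝕜} (hA : A.IsDiag) {c : ℝ}
    (hc : ∀ i, ‖A i i‖ ≤ c) (w : n → 𝕜) :
    RCLike.re (star w ⬝ᵥ (A *ᵥ w)) ≤ c * ∑ i, ‖w i‖ ^ 2 := by
  classical
  rw [← hA.diagonal_diag, dotProduct, map_sum, Finset.mul_sum]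
  refine Finset.sum_le_sum fun i _ => (RCLike.re_le_norm _).trans ?_
  rw [mulVec_diagonal, diag_apply, Pi.star_apply, norm_mul, norm_mul, norm_star, mul_left_comm,
    ← sq]
  exact mul_le_mul_of_nonneg_right (hc i) (by positivity)

theorem PosSemidef.mul_sum_norm_sq_le_re_dotProduct_add_smul_one [DecidableEq n]
    {B : Matrix n n 𝕜} (hB : B.PosSemidef) (σ : ℝ) (w : n → 𝕜) :
    σ * ∑ i, ‖w i‖ ^ 2 ≤ RCLike.re (star w ⬝ᵥ ((B + (σ : 𝕜) • 1) *ᵥ w)) := by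
  have hself : RCLike.re (star w ⬝ᵥ w) = ∑ i, ‖w i‖ ^ 2 := by
    simp only [dotProduct, map_sum, Pi.star_apply, RCLike.star_def, RCLike.conj_mul]
    norm_cast
  rw [add_mulVec, dotProduct_add, smul_mulVec, one_mulVec, dotProduct_smul, map_add,
    smul_eq_mul, RCLike.re_ofReal_mul, hself]
  linarith [hB.re_dotProduct_nonneg w]

end Matrix

theorem stmt_10 (N : ℕ) (σ2 hmax : ℝ) (hσ : 0 < σ2)
    (A B : Matrix (Fin N) (Fin N) ℂ) (q : Fin N → ℂ)
    (hAdiag : A.IsDiag) (hAnorm : ∀ i, ‖A i i‖ ≤ hmax ^ 2)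
    (hB : B.PosSemidef) :
    ((((B + (σ2 : ℂ) • 1)⁻¹ - (B + Matrix.vecMulVec q (star q) + (σ2 : ℂ) • 1)⁻¹) * A).trace).re
      ≤ hmax ^ 2 / σ2 := by
  set M := B + (σ2 : ℂ) • 1
  have hM : M.PosDef := hB.posDef_add_smul_one hσ
  set w := M⁻¹ *ᵥ q
  obtain ⟨hα0, hαim⟩ := Complex.nonneg_iff.mp (hM.inv.posSemidef.dotProduct_mulVec_nonneg q)
  set a := (star q ⬝ᵥ w).re
  have hα : star q ⬝ᵥ w = a := Complex.ext rfl hαim.symm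
  have hσa : σ2 * ∑ i, ‖w i‖ ^ 2 ≤ a :=
    (hB.mul_sum_norm_sq_le_re_dotProduct_add_smul_one σ2 w).trans_eq
      (congrArg Complex.re (hM.isHermitian.dotProduct_mulVec_inv_mulVec hM.isUnit q))
  have hα1 : 1 + star q ⬝ᵥ w ≠ 0 := by
    rw [hα]; exact_mod_cast (by linarith : 1 + a ≠ 0)
  rw [add_right_comm, hM.isHermitian.trace_inv_sub_inv_add_vecMulVec_star_mul hM.isUnit q hα1, hα,
    ← Complex.ofReal_one, ← Complex.ofReal_add, ← Complex.ofReal_inv, Complex.re_ofReal_mul]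
  have hβ := hAdiag.re_dotProduct_mulVec_le hAnorm w
  rw [RCLike.re_to_complex] at hβ
  have hs : 0 ≤ ∑ i, ‖w i‖ ^ 2 := by positivity
  rw [inv_mul_le_iff₀ (by linarith), mul_div_assoc', le_div_iff₀ hσ]
  nlinarith [mul_le_mul_of_nonneg_left hσa (sq_nonneg hmax)]
end

section
/- Let ρ : [0,1] × [0,α] → [0,∞) be bounded and measurable, σ² > 0, and β : [0,α] → [0,∞) measurable satisfying β(x) = ∫₀¹ ρ(f,x) df / (σ² + ∫₀^α ρ(f,y)/(1+β(y)) dy) for a.e. x (where the inner integral over y appears in the denominator for each f). If u(f) = 1/(∫₀^α ρ(f,y)/(1+β(y)) dy + σ²), then ∫₀¹ u(f) df − 1/σ² = −∫₀^α β(x)/(σ²(1+β(x))) dx. -/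
/-!
Since `1 / (D + σ²) - 1 / σ² = -D / (σ² (D + σ²))`, the left side is `-(1/σ²) ∫ D(f) / (D(f) + σ²) df`.
Expanding `D(f) = ∫ ρ(f, y) / (1 + β(y)) dy` and exchanging the integrals (the integrand is bounded
by `C / σ²`), the inner integral `∫ ρ(f, y) / (σ² + D(f)) df` is `β(y)` by the fixed-point equation,
which leaves `∫ β(y) / (1 + β(y)) dy`.
-/

open MeasureTheory

section Fubini

variable {X Y : Type*} [MeasurableSpace X] [MeasurableSpace Y]
  {μ : Measure X} {ν : Measure Y} [SFinite μ] [SFinite ν]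

theorem integral_integral_div_swap {k : X → Y → ℝ} {c : Y → ℝ} {d : X → ℝ}
    (hk : Integrable (fun p : X × Y => k p.1 p.2 / (c p.2 * d p.1)) (μ.prod ν)) :
    ∫ x, (∫ y, k x y / c y ∂ν) / d x ∂μ = ∫ y, (∫ x, k x y / d x ∂μ) / c y ∂ν := by
  simp_rw [← integral_div, div_div]
  calc ∫ x, ∫ y, k x y / (c y * d x) ∂ν ∂μ = ∫ y, ∫ x, k x y / (c y * d x) ∂μ ∂ν :=
        integral_integral_swap hk
    _ = ∫ y, ∫ x, k x y / (d x * c y) ∂μ ∂ν := by simp_rw [mul_comm]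

end Fubini

/-- The paper's `D(f)`. -/
noncomputable def effInterference {X Y : Type*} [MeasurableSpace Y] (ν : Measure Y)
    (ρ : X → Y → ℝ) (β : Y → ℝ) (x : X) : ℝ :=
  ∫ y, ρ x y / (1 + β y) ∂ν

section MMSE

variable {X Y : Type*} [MeasurableSpace Y] {ν : Measure Y} {ρ : X → Y → ℝ} {β : Y → ℝ}

theorem effInterference_nonneg (hρ : ∀ x y, 0 ≤ ρ x y) (hβ : ∀ y, 0 ≤ β y) (x : X) :
    0 ≤ effInterference ν ρ β x :=
  integral_nonneg fun y => div_nonneg (hρ x y) (by linarith [hβ y])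

variable [MeasurableSpace X] {μ : Measure X}

theorem measurable_effInterference [SFinite ν] (hρ : Measurable (Function.uncurry ρ))
    (hβ : Measurable β) : Measurable (effInterference ν ρ β) :=
  (hρ.div (measurable_const.add (hβ.comp measurable_snd))).stronglyMeasurable
    |>.integral_prod_right' |>.measurable

theorem integrable_kernel_div_effInterference [IsFiniteMeasure μ] [IsFiniteMeasure ν]
    {σ2 C : ℝ} (hσ : 0 < σ2)
    (hρmeas : Measurable (Function.uncurry ρ)) (hρ : ∀ x y, 0 ≤ ρ x y ∧ ρ x y ≤ C)
    (hβmeas : Measurable β) (hβ : ∀ y, 0 ≤ β y) :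
    Integrable (fun p : X × Y =>
      ρ p.1 p.2 / ((1 + β p.2) * (effInterference ν ρ β p.1 + σ2))) (μ.prod ν) := by
  refine Integrable.of_bound (C := C / σ2) ?_ (.of_forall fun p => ?_)
  · exact (hρmeas.div ((measurable_const.add (hβmeas.comp measurable_snd)).mul
      (((measurable_effInterference hρmeas hβmeas).add_const σ2).comp measurable_fst)))
      |>.aestronglyMeasurable
  · have hD := effInterference_nonneg (ν := ν) (fun x y => (hρ x y).1) hβ p.1
    have hden : σ2 ≤ (1 + β p.2) * (effInterference ν ρ β p.1 + σ2) := by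
      nlinarith [hβ p.2]
    rw [Real.norm_of_nonneg (div_nonneg (hρ _ _).1 (by linarith))]
    exact div_le_div₀ ((hρ p.1 p.2).1.trans (hρ p.1 p.2).2) (hρ p.1 p.2).2 hσ hden

theorem integral_inv_effInterference_add_sub [IsFiniteMeasure μ] [IsFiniteMeasure ν]
    {σ2 C : ℝ} (hσ : 0 < σ2)
    (hρmeas : Measurable (Function.uncurry ρ)) (hρ : ∀ x y, 0 ≤ ρ x y ∧ ρ x y ≤ C)
    (hβmeas : Measurable β) (hβ : ∀ y, 0 ≤ β y)
    (hβeq : ∀ᵐ y ∂ν, β y = ∫ x, ρ x y / (σ2 + effInterference ν ρ β x) ∂μ) :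
    ∫ x, 1 / (effInterference ν ρ β x + σ2) ∂μ - μ.real Set.univ / σ2
      = -∫ y, β y / (σ2 * (1 + β y)) ∂ν := by
  set D := effInterference ν ρ β
  have hD : ∀ x, 0 ≤ D x := effInterference_nonneg (fun x y => (hρ x y).1) hβ
  have hint : Integrable (fun x => 1 / (D x + σ2)) μ :=
    Integrable.of_bound (C := 1 / σ2)
      (((measurable_effInterference hρmeas hβmeas).add_const σ2).const_div 1
        |>.aestronglyMeasurable)
      (.of_forall fun x => by
        rw [Real.norm_of_nonneg (by have := hD x; positivity)]
        gcongr
        linarith [hD x])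
  have hfubini : ∫ x, D x / (D x + σ2) ∂μ = ∫ y, β y / (1 + β y) ∂ν := by
    refine (integral_integral_div_swap (c := fun y => 1 + β y) (d := fun x => D x + σ2)
      (integrable_kernel_div_effInterference hσ hρmeas hρ hβmeas hβ)).trans ?_
    refine integral_congr_ae (hβeq.mono fun y hy => ?_)
    simp only [hy, add_comm σ2]
  calc ∫ x, 1 / (D x + σ2) ∂μ - μ.real Set.univ / σ2
      = ∫ x, (1 / (D x + σ2) - 1 / σ2) ∂μ := by
        rw [integral_sub hint (integrable_const _), integral_const, smul_eq_mul, mul_one_div]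
    _ = ∫ x, -(D x / (D x + σ2)) / σ2 ∂μ := by
        refine integral_congr_ae (.of_forall fun x => ?_)
        have : D x + σ2 ≠ 0 := by linarith [hD x]
        field_simp
        ring
    _ = -∫ y, β y / (σ2 * (1 + β y)) ∂ν := by
        rw [integral_div, integral_neg, hfubini, neg_div, ← integral_div]
        simp_rw [div_div, mul_comm σ2]

end MMSE

theorem stmt_14 (α σ2 : ℝ) (hα : 0 < α) (hσ : 0 < σ2)
    (ρ : ℝ → ℝ → ℝ) (hρmeas : Measurable (fun p : ℝ × ℝ => ρ p.1 p.2))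
    (C : ℝ) (hρbdd : ∀ f x, 0 ≤ ρ f x ∧ ρ f x ≤ C)
    (β : ℝ → ℝ) (hβmeas : Measurable β) (hβnn : ∀ x, 0 ≤ β x)
    (hβeq : ∀ᵐ x ∂(volume.restrict (Set.Icc 0 α)),
      β x = ∫ f in (0:ℝ)..1,
        ρ f x / (σ2 + ∫ y in (0:ℝ)..α, ρ f y / (1 + β y)))
    (u : ℝ → ℝ)
    (hu : ∀ f, u f = 1 / ((∫ y in (0:ℝ)..α, ρ f y / (1 + β y)) + σ2)) :
    (∫ f in (0:ℝ)..1, u f) - 1 / σ2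
      = -∫ x in (0:ℝ)..α, β x / (σ2 * (1 + β x)) := by
  have hDinterval : ∀ f, ∫ y in (0:ℝ)..α, ρ f y / (1 + β y)
      = effInterference (volume.restrict (Set.Ioc 0 α)) ρ β f :=
    fun f => intervalIntegral.integral_of_le hα.le
  have hβeq' : ∀ᵐ x ∂(volume.restrict (Set.Ioc 0 α)), β x = ∫ f in Set.Ioc 0 1,
      ρ f x / (σ2 + effInterference (volume.restrict (Set.Ioc 0 α)) ρ β f) := by
    filter_upwards [ae_restrict_of_ae_restrict_of_subset Set.Ioc_subset_Icc_self hβeq] with x hx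
    simpa only [hDinterval, intervalIntegral.integral_of_le zero_le_one] using hx
  have hvol : (volume.restrict (Set.Ioc (0:ℝ) 1)).real Set.univ = 1 := by simp
  have hgeneral := integral_inv_effInterference_add_sub hσ hρmeas hρbdd hβmeas hβnn hβeq'
  rw [hvol] at hgeneral
  simp_rw [hu, hDinterval]
  rwa [intervalIntegral.integral_of_le zero_le_one, intervalIntegral.integral_of_le hα.le]
end

section
/- Let γ : [0,∞) → [0,∞) be C¹ with γ(0) = 0 and strictly quasiconcave in the sense that there exists β₀ > 0 with γ strictly increasing and strictly convex on [0, β₀] and γ'(β)β − γ(β) strictly decreasing for β > β₀ eventually becoming negative. Specifically, take γ(β) = (1 − e^{−β})^M for an integer M ≥ 2. Then the equation β·γ'(β) = γ(β) has a unique solution β* > 0. -/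
/-!
For `b > 0` the equation `b γ'(b) = γ(b)` with `γ(b) = (1 - e^{-b})^M` reduces, after cancelling
powers of `1 - e^{-b}` and multiplying by `e^b`, to `e^b = M b + 1`. The line `M b + 1` touches the
strictly convex `exp` at `0`; since its slope `M` exceeds `exp' 0 = 1`, it meets `exp` at exactly
one more point, which is positive.
-/

open Real Set

lemma hasDerivAt_one_sub_exp_neg_pow (n : ℕ) (b : ℝ) :
    HasDerivAt (fun β : ℝ => (1 - exp (-β)) ^ n)
      (n * (1 - exp (-b)) ^ (n - 1) * exp (-b)) b := by
  have h : HasDerivAt (fun β : ℝ => 1 - exp (-β)) (exp (-b)) b := by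
    simpa using ((hasDerivAt_neg b).exp).const_sub 1
  simpa [mul_assoc] using h.fun_pow n

lemma mul_deriv_one_sub_exp_neg_pow_eq_iff (n : ℕ) {b : ℝ} (hb : 0 < b) :
    b * deriv (fun β : ℝ => (1 - exp (-β)) ^ n) b = (1 - exp (-b)) ^ n ↔
      exp b = n * b + 1 := by
  rw [(hasDerivAt_one_sub_exp_neg_pow n b).deriv]
  set u := 1 - exp (-b)
  have hu_pos : 0 < u := by
    have : exp (-b) < 1 := by simpa using hb
    linarith
  -- multiplying by `u` turns `n * u ^ (n - 1)` into `n * u ^ n`, also when `n = 0`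
  have hmul : u * (b * (n * u ^ (n - 1) * exp (-b))) = u ^ n * (b * n * exp (-b)) := by
    rcases Nat.eq_zero_or_pos n with rfl | hn
    · simp
    · rw [← mul_pow_sub_one hn.ne' u]; ring
  have hexp : exp (-b) * exp b = 1 := by rw [← exp_add]; simp
  calc b * (n * u ^ (n - 1) * exp (-b)) = u ^ n
      ↔ u * (b * (n * u ^ (n - 1) * exp (-b))) = u * u ^ n := (mul_right_inj' hu_pos.ne').symm
    _ ↔ u ^ n * (b * n * exp (-b)) = u ^ n * u := by rw [hmul, mul_comm u]
    _ ↔ b * n * exp (-b) = u := mul_right_inj' (pow_pos hu_pos n).ne'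
    _ ↔ exp b = n * b + 1 := by
        constructor <;> intro h
        · linear_combination -exp b * h + (b * n + 1) * hexp
        · linear_combination -exp (-b) * h + hexp

lemma exists_pos_exp_eq_mul_add_one {a : ℝ} (ha : 1 < a) : ∃ b, 0 < b ∧ exp b = a * b + 1 := by
  have ha0 : 0 < a := one_pos.trans ha
  -- `a * log a > a - 1` is `log (1 / a) < 1 / a - 1`
  have hlog : a - 1 < a * log a := by
    have h := log_lt_sub_one_of_pos (inv_pos.mpr ha0) (inv_ne_one.mpr ha.ne')
    rw [log_inv] at h
    have : a * a⁻¹ = 1 := mul_inv_cancel₀ ha0.ne'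
    nlinarith
  have hlog_pos : 0 < log a := log_pos ha
  have hlow : exp (log a) - (a * log a + 1) < 0 := by rw [exp_log ha0]; linarith
  have hhigh : 0 < exp (2 * a) - (a * (2 * a) + 1) := by
    nlinarith [quadratic_le_exp_of_nonneg (by positivity : 0 ≤ 2 * a)]
  have hle : log a ≤ 2 * a := by linarith [log_le_sub_one_of_pos ha0]
  obtain ⟨b, hb, hfb⟩ := intermediate_value_Icc hle
    (f := fun x => exp x - (a * x + 1)) (by fun_prop) ⟨hlow.le, hhigh.le⟩
  exact ⟨b, hlog_pos.trans_le hb.1, sub_eq_zero.mp hfb⟩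

-- the secant slope `(exp x - 1) / x` of `exp` at `0` is strictly increasing
lemma eq_of_exp_eq_mul_add_one {a x y : ℝ} (hx : 0 < x) (hy : 0 < y)
    (hxa : exp x = a * x + 1) (hya : exp y = a * y + 1) : x = y := by
  have slope_lt {x y : ℝ} (hx : 0 < x) (hy : 0 < y) (hxy : x < y)
      (hxa : exp x = a * x + 1) (hya : exp y = a * y + 1) : False := by
    have h := strictConvexOn_exp.secant_strict_mono (mem_univ 0) (mem_univ x) (mem_univ y)
      hx.ne' hy.ne' hxy
    simp [hxa, hya, hx.ne', hy.ne'] at h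
  rcases lt_trichotomy x y with hxy | hxy | hxy
  · exact (slope_lt hx hy hxy hxa hya).elim
  · exact hxy
  · exact (slope_lt hy hx hxy hya hxa).elim

theorem stmt_15 (M : ℕ) (hM : 2 ≤ M) :
    ∃! b : ℝ, 0 < b ∧
      b * deriv (fun β : ℝ => (1 - Real.exp (-β)) ^ M) b
        = (1 - Real.exp (-b)) ^ M := by
  have hM1 : (1 : ℝ) < M := by exact_mod_cast hM
  obtain ⟨b, hb, hbM⟩ := exists_pos_exp_eq_mul_add_one hM1
  refine ⟨b, ⟨hb, (mul_deriv_one_sub_exp_neg_pow_eq_iff M hb).mpr hbM⟩, ?_⟩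
  rintro c ⟨hc, hcM⟩
  exact eq_of_exp_eq_mul_add_one hc hb ((mul_deriv_one_sub_exp_neg_pow_eq_iff M hc).mp hcM) hbM
end
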